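/- arXiv:2112.14869 — 4 statements merged into one kernel-verified Lean document; each statement's English description precedes it below -/
import Mathlib

section
/- For the generalized cross-entropy objective with parameter 0 ≤ λ < 1, the minimizer p* of ∑_{i=1}^K q_i (1 − p_i^λ)/λ over p ∈ Δ_K satisfies p*_i ∝ q_i^{1/(1−λ)}; in particular p* is rank consistent with q (q_i < q_j implies p*_i < p*_j). -/
/-!
Write the objective as `∑ q i * f (p i)` with `f = gceLoss λ`, which is strictly convex on
`(0, ∞)` with `f' x = -x ^ (λ - 1)`. At `p̂ i ∝ q i ^ (1 / (1 - λ))` the weighted slopes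
`q i * f' (p̂ i)` all equal the same constant, so summing the strict tangent-line inequalities at
`p̂` over the simplex shows that `p̂` is the unique minimizer; rank consistency is then
monotonicity of `t ↦ t ^ (1 / (1 - λ))`.
-/

open Finset Set

lemma StrictConvexOn.add_mul_sub_lt_of_hasDerivAt {S : Set ℝ} {f : ℝ → ℝ} {x y f' : ℝ}
    (hf : StrictConvexOn ℝ S f) (hx : x ∈ S) (hy : y ∈ S) (hxy : x ≠ y)
    (hf' : HasDerivAt f f' x) : f x + f' * (y - x) < f y := by
  rcases hxy.lt_or_gt with hlt | hgt
  · have h := hf.lt_slope_of_hasDerivAt hx hy hlt hf'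
    rw [slope_def_field, lt_div_iff₀ (sub_pos.2 hlt)] at h
    linarith
  · have h := hf.slope_lt_of_hasDerivAt hy hx hgt hf'
    rw [slope_def_field, div_lt_iff₀ (sub_pos.2 hgt)] at h
    linarith

lemma StrictConvexOn.sum_mul_lt_of_hasDerivAt {ι : Type*} [Fintype ι] {S : Set ℝ} {f : ℝ → ℝ}
    (hf : StrictConvexOn ℝ S f) {w x y d : ι → ℝ} {c : ℝ} (hw : ∀ i, 0 < w i)
    (hx : ∀ i, x i ∈ S) (hy : ∀ i, y i ∈ S) (hd : ∀ i, HasDerivAt f (d i) (x i))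
    (hc : ∀ i, w i * d i = c) (hsum : ∑ i, x i = ∑ i, y i) (hxy : x ≠ y) :
    ∑ i, w i * f (x i) < ∑ i, w i * f (y i) := by
  obtain ⟨j, hj⟩ := Function.ne_iff.1 hxy
  have tangent (i : ι) : w i * f (x i) + c * (y i - x i) = w i * (f (x i) + d i * (y i - x i)) := by
    rw [← hc i]; ring
  have key : ∑ i, (w i * f (x i) + c * (y i - x i)) < ∑ i, w i * f (y i) := by
    refine Finset.sum_lt_sum (fun i _ => ?_) ⟨j, mem_univ j, ?_⟩
    · rw [tangent]
      refine mul_le_mul_of_nonneg_left ?_ (hw i).le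
      rcases eq_or_ne (x i) (y i) with h | h
      · rw [h, sub_self, mul_zero, add_zero]
      · exact (hf.add_mul_sub_lt_of_hasDerivAt (hx i) (hy i) h (hd i)).le
    · rw [tangent]
      exact mul_lt_mul_of_pos_left (hf.add_mul_sub_lt_of_hasDerivAt (hx j) (hy j) hj (hd j)) (hw j)
  rwa [sum_add_distrib, ← mul_sum, sum_sub_distrib, hsum, sub_self, mul_zero, add_zero] at key

noncomputable def gceLoss (lam x : ℝ) : ℝ :=
  if lam = 0 then -Real.log x else (1 - x ^ lam) / lam

lemma hasDerivAt_gceLoss (lam : ℝ) {x : ℝ} (hx : 0 < x) :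
    HasDerivAt (gceLoss lam) (-x ^ (lam - 1)) x := by
  by_cases hl : lam = 0
  · have h : gceLoss lam = fun x => -Real.log x := funext fun x => if_pos hl
    rw [h, hl, zero_sub, Real.rpow_neg_one]
    exact (Real.hasDerivAt_log hx.ne').neg
  · have h : gceLoss lam = fun x => (1 - x ^ lam) / lam := funext fun x => if_neg hl
    have hd := ((Real.hasDerivAt_rpow_const (p := lam) (Or.inl hx.ne')).const_sub 1).div_const lam
    rwa [← h, neg_div, mul_div_cancel_left₀ _ hl] at hd

lemma strictConvexOn_gceLoss {lam : ℝ} (hlam : lam < 1) :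
    StrictConvexOn ℝ (Ioi 0) (gceLoss lam) := by
  have hderiv {x : ℝ} (hx : x ∈ Ioi (0 : ℝ)) : HasDerivAt (gceLoss lam) (-x ^ (lam - 1)) x :=
    hasDerivAt_gceLoss lam hx
  refine StrictMonoOn.strictConvexOn_of_deriv (convex_Ioi 0)
    (fun x hx => (hderiv hx).continuousAt.continuousWithinAt) ?_
  rw [interior_Ioi]
  intro x hx y hy hxy
  rw [(hderiv hx).deriv, (hderiv hy).deriv, neg_lt_neg_iff]
  exact Real.rpow_lt_rpow_of_neg hx hxy (by linarith)

section gceMinimizer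

variable {ι : Type*} [Fintype ι] (lam : ℝ) (q : ι → ℝ)

noncomputable def gceMinimizer (i : ι) : ℝ :=
  q i ^ (1 / (1 - lam)) / ∑ j, q j ^ (1 / (1 - lam))

variable {lam q}

lemma sum_rpow_pos [Nonempty ι] (hq : ∀ i, 0 < q i) (r : ℝ) : 0 < ∑ i, q i ^ r :=
  sum_pos (fun i _ => Real.rpow_pos_of_pos (hq i) r) univ_nonempty

lemma gceMinimizer_pos [Nonempty ι] (hq : ∀ i, 0 < q i) (i : ι) : 0 < gceMinimizer lam q i :=
  div_pos (Real.rpow_pos_of_pos (hq i) _) (sum_rpow_pos hq _)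

lemma sum_gceMinimizer [Nonempty ι] (hq : ∀ i, 0 < q i) : ∑ i, gceMinimizer lam q i = 1 := by
  unfold gceMinimizer
  rw [← sum_div, div_self (sum_rpow_pos hq _).ne']

lemma mul_gceMinimizer_rpow_sub_one [Nonempty ι] (hlam : lam < 1) (hq : ∀ i, 0 < q i) (i : ι) :
    q i * gceMinimizer lam q i ^ (lam - 1) = (∑ j, q j ^ (1 / (1 - lam))) ^ (1 - lam) := by
  unfold gceMinimizer
  set Z := ∑ j, q j ^ (1 / (1 - lam))
  have hZ : 0 < Z := sum_rpow_pos hq _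
  have hexp : 1 / (1 - lam) * (lam - 1) = -1 := by
    field_simp [(sub_pos.2 hlam).ne']
    ring
  have hZexp : Z ^ (1 - lam) = (Z ^ (lam - 1))⁻¹ := by rw [← Real.rpow_neg hZ.le, neg_sub]
  rw [Real.div_rpow (Real.rpow_nonneg (hq i).le _) hZ.le, ← Real.rpow_mul (hq i).le, hexp,
    Real.rpow_neg_one, hZexp]
  field_simp [(hq i).ne']

lemma sum_mul_gceLoss_gceMinimizer_lt [Nonempty ι] (hlam : lam < 1) (hq : ∀ i, 0 < q i)
    {p : ι → ℝ} (hp0 : ∀ i, 0 < p i) (hp1 : ∑ i, p i = 1) (hp : gceMinimizer lam q ≠ p) :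
    ∑ i, q i * gceLoss lam (gceMinimizer lam q i) < ∑ i, q i * gceLoss lam (p i) :=
  (strictConvexOn_gceLoss hlam).sum_mul_lt_of_hasDerivAt hq (gceMinimizer_pos hq) hp0
    (fun i => hasDerivAt_gceLoss lam (gceMinimizer_pos hq i))
    (fun i => by rw [mul_neg, mul_gceMinimizer_rpow_sub_one hlam hq])
    (by rw [sum_gceMinimizer hq, hp1]) hp

lemma gceMinimizer_lt_gceMinimizer (hlam : lam < 1) (hq : ∀ i, 0 < q i) {i j : ι}
    (hij : q i < q j) : gceMinimizer lam q i < gceMinimizer lam q j := by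
  have : Nonempty ι := ⟨i⟩
  exact div_lt_div_of_pos_right
    (Real.rpow_lt_rpow (hq i).le hij (one_div_pos.2 (sub_pos.2 hlam))) (sum_rpow_pos hq _)

end gceMinimizer

theorem gce_minimizer_rank_consistent_general (K : ℕ) (lam : ℝ)
    (hlam1 : lam < 1)
    (q : Fin K → ℝ) (hq0 : ∀ i, 0 < q i)
    (L : (Fin K → ℝ) → ℝ)
    (hL : L = fun p => if lam = 0 then ∑ i : Fin K, q i * (-(Real.log (p i)))
      else ∑ i : Fin K, q i * ((1 - p i ^ lam) / lam))
    (pstar : Fin K → ℝ) (hp0 : ∀ i, 0 < pstar i) (hp1 : ∑ i : Fin K, pstar i = 1)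
    (hmin : ∀ p : Fin K → ℝ, (∀ i, 0 < p i) → (∑ i : Fin K, p i = 1) → L pstar ≤ L p) :
    (∃ a : ℝ, 0 < a ∧ ∀ i : Fin K, pstar i = a * q i ^ (1 / (1 - lam))) ∧
    (∀ i j : Fin K, q i < q j → pstar i < pstar j) := by
  have hLeq : L = fun p => ∑ i, q i * gceLoss lam (p i) := by
    rw [hL]; by_cases hl : lam = 0 <;> simp [gceLoss, hl]
  have : Nonempty (Fin K) :=
    univ_nonempty_iff.1 (nonempty_of_sum_ne_zero (hp1 ▸ one_ne_zero : ∑ i, pstar i ≠ 0))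
  have hpstar : pstar = gceMinimizer lam q := by
    by_contra hne
    have hle := hmin (gceMinimizer lam q) (gceMinimizer_pos hq0) (sum_gceMinimizer hq0)
    rw [hLeq] at hle
    exact hle.not_gt (sum_mul_gceLoss_gceMinimizer_lt hlam1 hq0 hp0 hp1 (Ne.symm hne))
  subst hpstar
  exact ⟨⟨(∑ j, q j ^ (1 / (1 - lam)))⁻¹, inv_pos.2 (sum_rpow_pos hq0 _),
    fun i => div_eq_inv_mul _ _⟩, fun i j => gceMinimizer_lt_gceMinimizer hlam1 hq0⟩

/-- The minimizer of the GCE objective `∑ q_i (1 − p_i^λ)/λ` (λ = 0 interpreted as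
`−∑ q_i log p_i`) over the (positive) simplex is proportional to `q_i^{1/(1−λ)}`; in
particular it is rank consistent with `q`. -/
theorem gce_minimizer_rank_consistent (K : ℕ) (hK : 2 ≤ K) (lam : ℝ)
    (hlam0 : 0 ≤ lam) (hlam1 : lam < 1)
    (q : Fin K → ℝ) (hq0 : ∀ i, 0 < q i) (hq1 : ∑ i : Fin K, q i = 1)
    (L : (Fin K → ℝ) → ℝ)
    (hL : L = fun p => if lam = 0 then ∑ i : Fin K, q i * (-(Real.log (p i)))
      else ∑ i : Fin K, q i * ((1 - p i ^ lam) / lam))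
    (pstar : Fin K → ℝ) (hp0 : ∀ i, 0 < pstar i) (hp1 : ∑ i : Fin K, pstar i = 1)
    (hmin : ∀ p : Fin K → ℝ, (∀ i, 0 < p i) → (∑ i : Fin K, p i = 1) → L pstar ≤ L p) :
    (∃ a : ℝ, 0 < a ∧ ∀ i : Fin K, pstar i = a * q i ^ (1 / (1 - lam))) ∧
    (∀ i j : Fin K, q i < q j → pstar i < pstar j) :=
  gce_minimizer_rank_consistent_general K lam hlam1 q hq0 L hL pstar hp0 hp1 hmin
end

section
/- The top-k SVM loss admits the variational form: max over p in Ω(k) = {p ∈ ℝ^K : p ≥ 0, ∑_l p_l ≤ 1, p_l ≤ 1/k for all l} of ∑_l p_l a_l equals (1/k) · ∑_{i=1}^k max(0, a)_{[i]}, i.e., the average of the k largest entries of the vector (max(a_1, 0), …, max(a_K, 0)) — equivalently (1/k) times the sum of the k largest values of the coordinatewise-positive-part of a. -/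
/-!
The bound is weak LP duality: for every threshold `t ≥ 0` and every feasible `p`,
`p i * a i ≤ p i * t + (1/k) * (a i - t)⁺`, so `⟨p, a⟩ ≤ t + (1/k) ∑ (a i - t)⁺`.
Taking for `t` the smallest of the `k` largest entries of `a⁺` makes the right-hand side the
average of those entries, and the uniform weight `1/k` on the positive entries among them
attains it.
-/

open Finset

section TopK

theorem apply_le_of_forall_sum_le {ι : Type*} [DecidableEq ι] {s : Finset ι} {b : ι → ℝ}
    (hmax : ∀ t : Finset ι, #t = #s → ∑ i ∈ t, b i ≤ ∑ i ∈ s, b i)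
    {i j : ι} (hi : i ∈ s) (hj : j ∉ s) : b j ≤ b i := by
  have hj' : j ∉ s.erase i := fun h => hj (mem_of_mem_erase h)
  have hswap := hmax (insert j (s.erase i)) (by
    rw [card_insert_of_notMem hj', card_erase_of_mem hi]
    have := card_pos.2 ⟨i, hi⟩
    omega)
  rw [sum_insert hj', sum_erase_eq_sub hi] at hswap
  linarith

variable {ι : Type*} [Fintype ι]

theorem sum_max_sub_zero_eq {s : Finset ι} {b : ι → ℝ} {t : ℝ}
    (hs : ∀ i ∈ s, t ≤ b i) (hsc : ∀ i ∉ s, b i ≤ t) :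
    ∑ i, max (b i - t) 0 = ∑ i ∈ s, b i - #s * t := by
  classical
  rw [← sum_add_sum_compl s, sum_congr rfl fun i hi => max_eq_left (sub_nonneg.2 (hs i hi)),
    sum_eq_zero fun i hi => max_eq_right (sub_nonpos.2 (hsc i (mem_compl.1 hi))),
    sum_sub_distrib, sum_const, nsmul_eq_mul]
  ring

theorem sum_mul_le_add_mul_sum_max_sub {a p : ι → ℝ} {c t : ℝ} (ht : 0 ≤ t)
    (hp0 : ∀ i, 0 ≤ p i) (hp1 : ∑ i, p i ≤ 1) (hpc : ∀ i, p i ≤ c) :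
    ∑ i, p i * a i ≤ t + c * ∑ i, max (a i - t) 0 := by
  have hpoint : ∀ i, p i * a i ≤ t * p i + c * max (a i - t) 0 := fun i =>
    calc p i * a i = t * p i + p i * (a i - t) := by ring
      _ ≤ t * p i + p i * max (a i - t) 0 := by gcongr; exacts [hp0 i, le_max_left (a i - t) 0]
      _ ≤ t * p i + c * max (a i - t) 0 := by gcongr; exact hpc i
  calc ∑ i, p i * a i ≤ ∑ i, (t * p i + c * max (a i - t) 0) :=
        sum_le_sum fun i _ => hpoint i
    _ = t * ∑ i, p i + c * ∑ i, max (a i - t) 0 := by rw [sum_add_distrib, mul_sum, mul_sum]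
    _ ≤ t + c * ∑ i, max (a i - t) 0 := by nlinarith

theorem sum_mul_le_of_forall_sum_le {s : Finset ι} (hs : s.Nonempty) {a p : ι → ℝ}
    (hmax : ∀ t : Finset ι, #t = #s → ∑ i ∈ t, max (a i) 0 ≤ ∑ i ∈ s, max (a i) 0)
    (hp0 : ∀ i, 0 ≤ p i) (hp1 : ∑ i, p i ≤ 1) (hpk : ∀ i, p i ≤ 1 / (#s : ℝ)) :
    ∑ i, p i * a i ≤ 1 / (#s : ℝ) * ∑ i ∈ s, max (a i) 0 := by
  classical
  set b : ι → ℝ := fun i => max (a i) 0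
  obtain ⟨i₀, hi₀, hmin⟩ := exists_mem_eq_inf' hs b
  have hs_ge : ∀ i ∈ s, b i₀ ≤ b i := fun i hi => hmin ▸ inf'_le b hi
  have hsc_le : ∀ j ∉ s, b j ≤ b i₀ := fun j hj => apply_le_of_forall_sum_le hmax hi₀ hj
  have hcard : (#s : ℝ) ≠ 0 := by exact_mod_cast hs.card_pos.ne'
  calc ∑ i, p i * a i ≤ ∑ i, p i * b i :=
        sum_le_sum fun i _ => mul_le_mul_of_nonneg_left (le_max_left _ _) (hp0 i)
    _ ≤ b i₀ + 1 / (#s : ℝ) * ∑ i, max (b i - b i₀) 0 :=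
        sum_mul_le_add_mul_sum_max_sub (le_max_right _ _) hp0 hp1 hpk
    _ = 1 / (#s : ℝ) * ∑ i ∈ s, b i := by
        rw [sum_max_sub_zero_eq hs_ge hsc_le]
        field_simp
        ring

theorem exists_sum_mul_eq_of_card_eq {k : ℕ} {s : Finset ι} (hs : #s = k) (a : ι → ℝ) :
    ∃ p : ι → ℝ, (∀ i, 0 ≤ p i) ∧ (∑ i, p i ≤ 1) ∧ (∀ i, p i ≤ 1 / (k : ℝ)) ∧
      ∑ i, p i * a i = 1 / (k : ℝ) * ∑ i ∈ s, max (a i) 0 := by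
  classical
  set T := s.filter fun i => 0 < a i
  have hT : ∑ i ∈ s, max (a i) 0 = ∑ i ∈ T, a i := by
    rw [sum_filter]
    refine sum_congr rfl fun i _ => ?_
    split_ifs with h
    exacts [max_eq_left h.le, max_eq_right (not_lt.1 h)]
  refine ⟨fun i => if i ∈ T then 1 / (k : ℝ) else 0, fun i => ?_, ?_, fun i => ?_, ?_⟩
  · dsimp only
    split <;> positivity
  · rw [sum_ite_mem, univ_inter, sum_const, nsmul_eq_mul]
    have hTk : (#T : ℝ) ≤ k := by exact_mod_cast hs ▸ card_filter_le _ _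
    calc (#T : ℝ) * (1 / k) ≤ k * (1 / k) := by gcongr
      _ ≤ 1 := by rw [mul_one_div]; exact div_self_le_one _
  · dsimp only
    split
    · exact le_rfl
    · positivity
  · simp only [ite_mul, zero_mul]
    rw [sum_ite_mem, univ_inter, hT, mul_sum]

end TopK

/-- Variational form of the top-k SVM loss: the maximum of `⟨p, a⟩` over
`Ω(k) = {p : p ≥ 0, ∑ p_l ≤ 1, p_l ≤ 1/k}` equals `(1/k)` times the sum of the k largest
entries of the coordinatewise positive part of `a` (expressed as a maximum over size-k
subsets). -/
theorem topk_svm_variational (K k : ℕ) (hk : 1 ≤ k) (hkK : k ≤ K) (a : Fin K → ℝ)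
    (v : ℝ)
    (hv : v = (1 / (k : ℝ)) *
      ((Finset.univ.powersetCard k).sup'
        (by
          rw [Finset.powersetCard_nonempty]
          simpa using hkK)
        (fun S => ∑ i ∈ S, max (a i) 0))) :
    (∃ p : Fin K → ℝ, (∀ i, 0 ≤ p i) ∧ (∑ i : Fin K, p i ≤ 1) ∧ (∀ i, p i ≤ 1 / (k : ℝ)) ∧
      ∑ i : Fin K, p i * a i = v) ∧
    (∀ p : Fin K → ℝ, (∀ i, 0 ≤ p i) → (∑ i : Fin K, p i ≤ 1) → (∀ i, p i ≤ 1 / (k : ℝ)) →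
      ∑ i : Fin K, p i * a i ≤ v) := by
  have hne : (univ.powersetCard k : Finset (Finset (Fin K))).Nonempty :=
    powersetCard_nonempty.2 (by simpa using hkK)
  obtain ⟨S, hSmem, hSv⟩ := exists_mem_eq_sup' hne fun S => ∑ i ∈ S, max (a i) 0
  have hS : #S = k := (mem_powersetCard.1 hSmem).2
  rw [hSv] at hv
  subst hv
  refine ⟨exists_sum_mul_eq_of_card_eq hS a, fun p hp0 hp1 hpk => ?_⟩
  have hmax : ∀ T : Finset (Fin K), #T = #S → ∑ i ∈ T, max (a i) 0 ≤ ∑ i ∈ S, max (a i) 0 :=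
    fun T hT => hSv ▸ le_sup' (fun S : Finset (Fin K) => ∑ i ∈ S, max (a i) 0)
      (mem_powersetCard.2 ⟨subset_univ T, hT.trans hS⟩)
  subst hS
  exact sum_mul_le_of_forall_sum_le (card_pos.1 (by omega)) hmax hp0 hp1 hpk
end

section
/- Solution structure for KL-regularized capped simplex maximization: for q ∈ ℝ^K sorted with [i] denoting the index of the i-th largest entry, λ > 0, and k ∈ {1,…,K}, define for a ∈ {1,…,K} the vector p(a) by p(a)_{[i]} = 1/k for i < a and p(a)_{[i]} = exp(q_{[i]}/λ − 1) · min(1/K, (1 − (a−1)/k)/∑_{j=a}^K exp(q_{[j]}/λ − 1)) for i ≥ a. Then the maximizer of ∑_i p_i q_i − λ ∑_i p_i log(K p_i) over {p : p ≥ 0, ∑_i p_i ≤ 1, p_i ≤ 1/k ∀i} is p(a*) where a* is the smallest a with p(a)_{[a]} ≤ 1/k. -/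
/-!
The objective is concave, so a positive feasible point is a maximizer as soon as it satisfies the
KKT conditions: the partial derivatives `q i - λ (log (K p i) + 1)` equal a common multiplier
`c ≥ 0` at the uncapped coordinates and are at least `c` at the coordinates capped at `1 / k`,
with `c = 0` unless the budget `∑ p i = 1` is tight. At `p(a*)` the uncapped coordinates are
`exp (q i / λ - 1) * m` with `m ≤ 1 / K`, so they share the derivative `c = -λ log (K m) ≥ 0`,
and `c = 0` when `m = 1 / K` while otherwise the budget is exhausted. Minimality of `a*` says that
each capped coordinate `b` would exceed `1 / k` at its own level `m(b)`; saturating it only raises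
the level, so `m(b) ≤ m(a*)` and the capped coordinates have derivative at least `c`. The same
comparison at `b = k - 1` forces `a* < k`, which keeps `p(a*)` positive.
-/

open Finset Real InformationTheory

section

variable {ι ι' : Type*} [Fintype ι] [Fintype ι']

noncomputable def klObjective (C lam : ℝ) (q p : ι → ℝ) : ℝ :=
  ∑ i, p i * q i - lam * ∑ i, p i * log (C * p i)

noncomputable def klObjectiveGrad (C lam qi v : ℝ) : ℝ := qi - lam * (log (C * v) + 1)

def cappedSimplex (u : ℝ) : Set (ι → ℝ) :=
  {p | (∀ i, 0 ≤ p i) ∧ ∑ i, p i ≤ 1 ∧ ∀ i, p i ≤ u}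

/-- The Bregman divergence of `t ↦ t log t` is `s * klFun (t / s) ≥ 0`. -/
lemma mul_log_tangent_le {C s t : ℝ} (hC : C ≠ 0) (hs : 0 < s) (ht : 0 ≤ t) :
    s * log (C * s) + (log (C * s) + 1) * (t - s) ≤ t * log (C * t) := by
  rcases ht.eq_or_lt with rfl | ht
  · simp only [mul_zero, log_zero, zero_sub]
    linarith
  have hdiv : 0 ≤ s * klFun (t / s) := mul_nonneg hs.le (klFun_nonneg (by positivity))
  rw [klFun_apply, log_div ht.ne' hs.ne'] at hdiv
  rw [log_mul hC ht.ne', log_mul hC hs.ne']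
  have hst : s * (t / s) = t := mul_div_cancel₀ t hs.ne'
  nlinarith

lemma klObjectiveGrad_antitoneOn {C lam qi : ℝ} (hC : 0 < C) (hlam : 0 ≤ lam) :
    AntitoneOn (klObjectiveGrad C lam qi) (Set.Ioi 0) := fun v hv w _ hvw => by
  unfold klObjectiveGrad
  gcongr
  exact mul_pos hC hv

lemma klObjectiveGrad_exp_mul {C lam qi m : ℝ} (hC : C ≠ 0) (hlam : lam ≠ 0) (hm : m ≠ 0) :
    klObjectiveGrad C lam qi (exp (qi / lam - 1) * m) = -lam * log (C * m) := by
  unfold klObjectiveGrad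
  rw [mul_left_comm, log_mul (exp_ne_zero _) (mul_ne_zero hC hm), log_exp]
  field_simp
  ring

theorem klObjective_le_of_kkt {C lam u c : ℝ} {q P p : ι → ℝ} (hC : C ≠ 0) (hlam : 0 ≤ lam)
    (hP : ∀ i, 0 < P i) (hc : 0 ≤ c) (hslack : c = 0 ∨ ∑ i, P i = 1)
    (hkkt : ∀ i, klObjectiveGrad C lam (q i) (P i) = c ∨
      c ≤ klObjectiveGrad C lam (q i) (P i) ∧ P i = u)
    (hp : p ∈ cappedSimplex u) :
    klObjective C lam q p ≤ klObjective C lam q P := by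
  obtain ⟨hp0, hpsum, hpcap⟩ := hp
  have htangent : ∀ i, p i * q i - lam * (p i * log (C * p i)) ≤
      P i * q i - lam * (P i * log (C * P i)) + klObjectiveGrad C lam (q i) (P i) * (p i - P i) :=
    fun i => by
      have := mul_le_mul_of_nonneg_left (mul_log_tangent_le hC (hP i) (hp0 i)) hlam
      unfold klObjectiveGrad
      linarith
  have hdescent : ∀ i, klObjectiveGrad C lam (q i) (P i) * (p i - P i) ≤ c * (p i - P i) := by
    intro i
    rcases hkkt i with h | ⟨h, hu⟩
    · rw [h]
    · exact mul_le_mul_of_nonpos_right h (by linarith [hpcap i])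
  have hbudget : c * (∑ i, p i - ∑ i, P i) ≤ 0 := by
    rcases hslack with h | h
    · simp [h]
    · exact mul_nonpos_of_nonneg_of_nonpos hc (by linarith)
  calc klObjective C lam q p = ∑ i, (p i * q i - lam * (p i * log (C * p i))) := by
        simp only [klObjective, mul_sum, sum_sub_distrib]
    _ ≤ ∑ i, (P i * q i - lam * (P i * log (C * P i)) + c * (p i - P i)) :=
        sum_le_sum fun i _ => (htangent i).trans (by linarith [hdescent i])
    _ = klObjective C lam q P + c * (∑ i, p i - ∑ i, P i) := by
        simp only [klObjective, mul_sum, mul_sub, sum_sub_distrib, sum_add_distrib]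
    _ ≤ klObjective C lam q P := by linarith

lemma klObjective_comp_equiv {C lam : ℝ} {q p : ι → ℝ} (σ : ι' ≃ ι) :
    klObjective C lam (q ∘ σ) (p ∘ σ) = klObjective C lam q p := by
  simp only [klObjective, Function.comp_apply, Equiv.sum_comp σ (fun i => p i * q i),
    Equiv.sum_comp σ (fun i => p i * log (C * p i))]

lemma comp_equiv_mem_cappedSimplex_iff {u : ℝ} {p : ι → ℝ} (σ : ι' ≃ ι) :
    p ∘ σ ∈ cappedSimplex u ↔ p ∈ cappedSimplex u := by
  simp only [cappedSimplex, Set.mem_ofPred_eq, Function.comp_apply, Equiv.sum_comp σ p]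
  exact and_congr (σ.forall_congr_right (q := fun i => 0 ≤ p i))
    (and_congr_right' (σ.forall_congr_right (q := fun i => p i ≤ u)))

end

section

variable {K : ℕ} (k : ℕ) (e : Fin K → ℝ)

noncomputable def tailSum (b : ℕ) : ℝ := ∑ j ∈ univ.filter (fun j : Fin K => b ≤ (j : ℕ)), e j

noncomputable def waterLevel (b : ℕ) : ℝ :=
  min (1 / (K : ℝ)) ((1 - b / (k : ℝ)) / tailSum e b)

/-- The paper's `p(a)` in sorted (0-based) coordinates, for `e j = exp (q_[j] / λ - 1)`. -/
noncomputable def waterFill (a : ℕ) (i : Fin K) : ℝ :=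
  if (i : ℕ) < a then 1 / (k : ℝ) else e i * waterLevel k e a

variable {k e}

lemma waterFill_self (b : Fin K) : waterFill k e b b = e b * waterLevel k e b :=
  if_neg (lt_irrefl _)

lemma tailSum_eq_add_tailSum_succ (i : Fin K) : tailSum e i = e i + tailSum e (i + 1) := by
  rw [tailSum, tailSum, ← sum_insert (by simp)]
  congr 1
  ext j
  simp only [mem_filter, mem_univ, true_and, mem_insert, Fin.ext_iff]
  omega

lemma waterLevel_le_one_div (b : ℕ) : waterLevel k e b ≤ 1 / K := min_le_left _ _

lemma waterLevel_mul_tailSum_le {b : ℕ} (hS : 0 < tailSum e b) :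
    waterLevel k e b * tailSum e b ≤ 1 - b / k :=
  (le_div_iff₀ hS).1 (min_le_right _ _)

lemma sum_waterFill (a : Fin K) :
    ∑ i, waterFill k e a i = a / k + waterLevel k e a * tailSum e a := by
  simp only [waterFill, sum_ite, sum_const, Fin.card_filter_val_lt, nsmul_eq_mul, ← sum_mul,
    not_lt, tailSum]
  rw [min_eq_right a.is_lt.le]
  ring

variable (he : ∀ i, 0 < e i)
include he

lemma tailSum_pos {b : ℕ} (j : Fin K) (hj : b ≤ j) : 0 < tailSum e b :=
  sum_pos (fun i _ => he i) ⟨j, by simpa using hj⟩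

lemma waterLevel_pos {b : Fin K} (hb : (b : ℕ) < k) : 0 < waterLevel k e b := by
  have hk : (0 : ℝ) < k := by exact_mod_cast b.val.zero_le.trans_lt hb
  have hK : (0 : ℝ) < K := by exact_mod_cast b.pos
  have hbk : (b : ℝ) / k < 1 := (div_lt_one hk).2 (by exact_mod_cast hb)
  exact lt_min (one_div_pos.2 hK) (div_pos (sub_pos.2 hbk) (tailSum_pos he b le_rfl))

lemma mul_waterLevel_le {b : Fin K} (hb : (b : ℕ) ≤ k) : e b * waterLevel k e b ≤ 1 - b / k := by
  have hS := tailSum_pos he b le_rfl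
  have hbk : 0 ≤ 1 - (b : ℝ) / k := by
    rcases Nat.eq_zero_or_pos k with rfl | hk
    · simp
    · rw [sub_nonneg, div_le_one (by positivity)]; exact_mod_cast hb
  calc e b * waterLevel k e b ≤ e b * ((1 - b / k) / tailSum e b) :=
        mul_le_mul_of_nonneg_left (min_le_right _ _) (he b).le
    _ = e b / tailSum e b * (1 - b / k) := by ring
    _ ≤ 1 * (1 - b / k) := by
        gcongr
        exact (div_le_one hS).2 (single_le_sum (fun j _ => (he j).le) (by simp))
    _ = 1 - b / k := one_mul _

/-- Saturating coordinate `i` at `1 / k` frees more than its share of the budget. -/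
lemma waterLevel_le_succ {i j : Fin K} (hij : i < j) (hi : 1 / k < e i * waterLevel k e i) :
    waterLevel k e i ≤ waterLevel k e (i + 1) := by
  have hS := waterLevel_mul_tailSum_le (k := k) (tailSum_pos he i le_rfl)
  rw [tailSum_eq_add_tailSum_succ] at hS
  refine le_min (min_le_left _ _) ((le_div_iff₀ (tailSum_pos he j hij)).2 ?_)
  push_cast
  rw [add_div]
  linarith

lemma waterFill_pos {a : Fin K} (ha : (a : ℕ) < k) (i : Fin K) : 0 < waterFill k e a i := by
  unfold waterFill
  split_ifs
  · exact one_div_pos.2 (by exact_mod_cast (Nat.zero_le _).trans_lt ha)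
  · exact mul_pos (he i) (waterLevel_pos he ha)

lemma waterFill_le (he_anti : Antitone e) {a : Fin K} (ha : (a : ℕ) < k)
    (hfeas : e a * waterLevel k e a ≤ 1 / k) (i : Fin K) : waterFill k e a i ≤ 1 / k := by
  unfold waterFill
  split_ifs with hi
  · exact le_rfl
  · exact le_trans (by gcongr; exacts [(waterLevel_pos he ha).le, he_anti (not_lt.1 hi)]) hfeas

lemma sum_waterFill_le_one (a : Fin K) : ∑ i, waterFill k e a i ≤ 1 := by
  rw [sum_waterFill]
  linarith [waterLevel_mul_tailSum_le (k := k) (tailSum_pos he a le_rfl)]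

lemma waterLevel_eq_or_sum_waterFill_eq_one (a : Fin K) :
    waterLevel k e a = 1 / K ∨ ∑ i, waterFill k e a i = 1 := by
  rcases min_choice (1 / (K : ℝ)) ((1 - a / (k : ℝ)) / tailSum e a) with h | h
  · exact Or.inl h
  · right
    rw [sum_waterFill, waterLevel, h, div_mul_cancel₀ _ (tailSum_pos he a le_rfl).ne']
    ring

variable {A : Fin K} (hsmall : ∀ b : Fin K, (b : ℕ) < A → 1 / k < e b * waterLevel k e b)
include hsmall

lemma waterLevel_monotoneOn : MonotoneOn (waterLevel k e) (Set.Iic (A : ℕ)) :=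
  monotoneOn_of_le_succ Set.ordConnected_Iic fun b _ _ hb => by
    rw [Order.succ_eq_add_one] at hb ⊢
    have hbA : b < A := hb
    exact waterLevel_le_succ he (i := ⟨b, by omega⟩) (j := A) hbA (hsmall _ hbA)

lemma val_lt_of_forall_lt_mul_waterLevel (hk : 1 ≤ k) : (A : ℕ) < k := by
  by_contra! hkA
  have hb := hsmall ⟨k - 1, by omega⟩ (by simp only; omega)
  have := mul_waterLevel_le he (b := ⟨k - 1, by omega⟩) (Nat.sub_le k 1)
  have hk' : ((k - 1 : ℕ) : ℝ) = k - 1 := by push_cast [Nat.cast_sub hk]; ring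
  simp only [hk'] at this
  have : (1 : ℝ) - (k - 1) / k = 1 / k := by field_simp; ring
  linarith

end

theorem waterFill_isMaxOn_klObjective {K k : ℕ} {lam : ℝ} {r : Fin K → ℝ} (hk : 1 ≤ k)
    (hlam : 0 < lam) (hr : Antitone r) (A : Fin K)
    (hfeas : waterFill k (fun j => exp (r j / lam - 1)) A A ≤ 1 / k)
    (hsmall : ∀ b : Fin K, (b : ℕ) < A →
      ¬ waterFill k (fun j => exp (r j / lam - 1)) b b ≤ 1 / k) :
    waterFill k (fun j => exp (r j / lam - 1)) A ∈ cappedSimplex (1 / k) ∧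
      IsMaxOn (klObjective K lam r) (cappedSimplex (1 / k))
        (waterFill k (fun j => exp (r j / lam - 1)) A) := by
  set e : Fin K → ℝ := fun j => exp (r j / lam - 1)
  have he : ∀ i, 0 < e i := fun i => exp_pos _
  have he_anti : Antitone e := fun i j hij => exp_le_exp.2 (by gcongr; exact hr hij)
  simp only [waterFill_self, not_le] at hfeas hsmall
  have hA := val_lt_of_forall_lt_mul_waterLevel he hsmall hk
  have hm := waterLevel_pos he hA
  have hK : (0 : ℝ) < K := by exact_mod_cast A.pos
  refine ⟨⟨fun i => (waterFill_pos he hA i).le, sum_waterFill_le_one he A,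
    waterFill_le he he_anti hA hfeas⟩, isMaxOn_iff.2 fun p hp =>
      klObjective_le_of_kkt (c := -lam * log (K * waterLevel k e A)) hK.ne' hlam.le
        (waterFill_pos he hA) ?_ ?_ ?_ hp⟩
  · have hKm : K * waterLevel k e A ≤ 1 := (le_div_iff₀' hK).1 (waterLevel_le_one_div A)
    rw [neg_mul, neg_nonneg]
    exact mul_nonpos_of_nonneg_of_nonpos hlam.le (log_nonpos (by positivity) hKm)
  · refine (waterLevel_eq_or_sum_waterFill_eq_one he A).imp_left fun h => ?_
    rw [h, mul_one_div_cancel hK.ne', log_one, mul_zero]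
  · intro i
    have hgrad := klObjectiveGrad_exp_mul (qi := r i) hK.ne' hlam.ne' hm.ne'
    unfold waterFill
    split_ifs with hi
    · have hsat : 1 / (k : ℝ) ≤ e i * waterLevel k e A := (hsmall i hi).le.trans
        (mul_le_mul_of_nonneg_left (waterLevel_monotoneOn he hsmall hi.le Set.self_mem_Iic hi.le)
          (he i).le)
      refine Or.inr ⟨?_, rfl⟩
      rw [← hgrad]
      exact klObjectiveGrad_antitoneOn hK hlam.le
        (Set.mem_Ioi.2 (one_div_pos.2 (Nat.cast_pos.2 hk))) (mul_pos (he i) hm) hsat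
    · exact Or.inl hgrad

theorem ldr_k_kl_solution_structure_general (K k : ℕ) (hk : 1 ≤ k)
    (q : Fin K → ℝ) (lam : ℝ) (hlam : 0 < lam)
    (σ : Equiv.Perm (Fin K)) (hsort : ∀ i j : Fin K, i ≤ j → q (σ j) ≤ q (σ i))
    (P : Fin K → (Fin K → ℝ))
    (hP : ∀ a i : Fin K, P a (σ i) =
      if (i : ℕ) < (a : ℕ) then 1 / (k : ℝ)
      else Real.exp (q (σ i) / lam - 1) *
        min (1 / (K : ℝ))
          ((1 - (a : ℕ) / (k : ℝ)) /
            ∑ j ∈ Finset.univ.filter (fun j : Fin K => (a : ℕ) ≤ (j : ℕ)),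
              Real.exp (q (σ j) / lam - 1)))
    (astar : Fin K)
    (hfeas : P astar (σ astar) ≤ 1 / (k : ℝ))
    (hsmallest : ∀ b : Fin K, (b : ℕ) < (astar : ℕ) → ¬ (P b (σ b) ≤ 1 / (k : ℝ))) :
    (∀ i, 0 ≤ P astar i) ∧ (∑ i : Fin K, P astar i ≤ 1) ∧
      (∀ i, P astar i ≤ 1 / (k : ℝ)) ∧
    (∀ p : Fin K → ℝ, (∀ i, 0 ≤ p i) → (∑ i : Fin K, p i ≤ 1) →
      (∀ i, p i ≤ 1 / (k : ℝ)) →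
      (∑ i : Fin K, p i * q i) - lam * ∑ i : Fin K, p i * Real.log ((K : ℝ) * p i)
        ≤ (∑ i : Fin K, P astar i * q i)
            - lam * ∑ i : Fin K, P astar i * Real.log ((K : ℝ) * P astar i)) := by
  have hPσ : ∀ a : Fin K, P a ∘ σ = waterFill k (fun j => exp ((q ∘ σ) j / lam - 1)) a :=
    fun a => funext (hP a)
  obtain ⟨hmem, hmax⟩ := waterFill_isMaxOn_klObjective (r := q ∘ σ) hk hlam hsort astar
    (by rw [← hPσ]; exact hfeas) (fun b hb => by rw [← hPσ]; exact hsmallest b hb)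
  rw [← hPσ] at hmem hmax
  rw [comp_equiv_mem_cappedSimplex_iff] at hmem
  refine ⟨hmem.1, hmem.2.1, hmem.2.2, fun p hp0 hpsum hpcap => ?_⟩
  have := isMaxOn_iff.1 hmax (p ∘ σ) ((comp_equiv_mem_cappedSimplex_iff σ).2 ⟨hp0, hpsum, hpcap⟩)
  rwa [klObjective_comp_equiv, klObjective_comp_equiv] at this

/-- Solution structure of the KL-regularized maximization over the capped simplex
`Ω(k) = {p : p ≥ 0, ∑ p ≤ 1, p_i ≤ 1/k}`: with coordinates sorted decreasingly via a
permutation σ, the candidate `p(a)` caps the first `a` sorted coordinates at `1/k` and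
water-fills the rest; the optimum is `p(a*)` for the smallest `a*` with
`p(a*)_{[a*]} ≤ 1/k` (indices 0-based). -/
theorem ldr_k_kl_solution_structure (K k : ℕ) (hk : 1 ≤ k) (hkK : k ≤ K)
    (q : Fin K → ℝ) (lam : ℝ) (hlam : 0 < lam)
    (σ : Equiv.Perm (Fin K)) (hsort : ∀ i j : Fin K, i ≤ j → q (σ j) ≤ q (σ i))
    (P : Fin K → (Fin K → ℝ))
    (hP : ∀ a i : Fin K, P a (σ i) =
      if (i : ℕ) < (a : ℕ) then 1 / (k : ℝ)
      else Real.exp (q (σ i) / lam - 1) *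
        min (1 / (K : ℝ))
          ((1 - (a : ℕ) / (k : ℝ)) /
            ∑ j ∈ Finset.univ.filter (fun j : Fin K => (a : ℕ) ≤ (j : ℕ)),
              Real.exp (q (σ j) / lam - 1)))
    (astar : Fin K)
    (hfeas : P astar (σ astar) ≤ 1 / (k : ℝ))
    (hsmallest : ∀ b : Fin K, (b : ℕ) < (astar : ℕ) → ¬ (P b (σ b) ≤ 1 / (k : ℝ))) :
    (∀ i, 0 ≤ P astar i) ∧ (∑ i : Fin K, P astar i ≤ 1) ∧
      (∀ i, P astar i ≤ 1 / (k : ℝ)) ∧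
    (∀ p : Fin K → ℝ, (∀ i, 0 ≤ p i) → (∑ i : Fin K, p i ≤ 1) →
      (∀ i, p i ≤ 1 / (k : ℝ)) →
      (∑ i : Fin K, p i * q i) - lam * ∑ i : Fin K, p i * Real.log ((K : ℝ) * p i)
        ≤ (∑ i : Fin K, P astar i * q i)
            - lam * ∑ i : Fin K, P astar i * Real.log ((K : ℝ) * P astar i)) :=
  ldr_k_kl_solution_structure_general K k hk q lam hlam σ hsort P hP astar hfeas hsmallest
end

section
/- In the adaptive LDR-KL loss, the inner maximization over p yields: ψ(x, y) = max_{λ ≥ 0} [ λ · log((1/K) ∑_k exp((f_k + c_{k,y} − f_y)/λ)) − (α/2)(λ − λ₀)² ], and at any stationary point with λ* > 0 one has KL(p*, 1/K) + α(λ* − λ₀) = 0, i.e., λ* = λ₀ − (1/α)·KL(p*, 1/K), where p*_k ∝ exp((f_k + c_{k,y} − f_y)/λ*). -/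
/-!
For a distribution `p`, the objective `∑ p q - λ KL(p, 1/K)` equals
`λ log((1/K) ∑ exp(q/λ)) - λ KL(p ‖ softmax(q/λ))`, so by Gibbs' inequality its maximum over the
simplex is the log-mean-exp, attained at the softmax distribution. Differentiating
`λ ↦ λ log((1/K) ∑ exp(q_k/λ))` gives `-KL(softmax(q/λ), 1/K)`, so the stationarity condition of
the outer objective reads `-KL(p*, 1/K) - α(λ* - λ₀) = 0`.
-/

open Finset Real

section

variable {ι : Type*} [Fintype ι]

noncomputable def softmax (q : ι → ℝ) (l : ℝ) (k : ι) : ℝ :=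
  exp (q k / l) / ∑ j, exp (q j / l)

noncomputable def logMeanExp (q : ι → ℝ) (l : ℝ) : ℝ :=
  log ((1 / (Fintype.card ι : ℝ)) * ∑ k, exp (q k / l))

noncomputable def klUniform (p : ι → ℝ) : ℝ :=
  ∑ k, p k * log (Fintype.card ι * p k)

lemma sub_le_mul_log_div {p r : ℝ} (hp : 0 ≤ p) (hr : 0 < r) : p - r ≤ p * log (p / r) := by
  have h := mul_le_mul_of_nonneg_left (self_sub_one_le_mul_log (div_nonneg hp hr.le)) hr.le
  calc p - r = r * (p / r - 1) := by field_simp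
    _ ≤ r * (p / r * log (p / r)) := h
    _ = p * log (p / r) := by field_simp

lemma sum_mul_log_div_nonneg {p r : ι → ℝ} (hp : ∀ k, 0 ≤ p k) (hr : ∀ k, 0 < r k)
    (hp1 : ∑ k, p k = 1) (hr1 : ∑ k, r k = 1) : 0 ≤ ∑ k, p k * log (p k / r k) :=
  calc (0 : ℝ) = ∑ k, (p k - r k) := by rw [sum_sub_distrib, hp1, hr1, sub_self]
    _ ≤ _ := sum_le_sum fun k _ => sub_le_mul_log_div (hp k) (hr k)

variable (q : ι → ℝ) (l : ℝ)

lemma hasDerivAt_sum_exp_div (hl : l ≠ 0) :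
    HasDerivAt (fun x => ∑ k, exp (q k / x)) (-(∑ k, exp (q k / l) * q k) / l ^ 2) l := by
  have hk : ∀ k, HasDerivAt (fun x => exp (q k / x)) (exp (q k / l) * (-q k / l ^ 2)) l :=
    fun k => ((hasDerivAt_const l (q k)).fun_div (hasDerivAt_id l) hl).exp.congr_deriv
      (by simp)
  refine (HasDerivAt.fun_sum fun k _ => hk k).congr_deriv ?_
  rw [neg_div, sum_div, ← sum_neg_distrib]
  exact sum_congr rfl fun k _ => by ring

variable [Nonempty ι]

lemma sum_exp_div_pos : (0 : ℝ) < ∑ k, exp (q k / l) :=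
  sum_pos (fun _ _ => exp_pos _) univ_nonempty

lemma softmax_pos (k : ι) : 0 < softmax q l k :=
  div_pos (exp_pos _) (sum_exp_div_pos q l)

lemma sum_softmax : ∑ k, softmax q l k = 1 := by
  simp only [softmax, ← sum_div, div_self (sum_exp_div_pos q l).ne']

lemma log_card_mul_softmax (k : ι) :
    log (Fintype.card ι * softmax q l k) = q k / l - logMeanExp q l := by
  have hK : (0 : ℝ) < Fintype.card ι := Nat.cast_pos.mpr Fintype.card_pos
  have hS := sum_exp_div_pos q l
  rw [softmax, logMeanExp, log_mul hK.ne' (div_pos (exp_pos _) hS).ne',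
    log_div (exp_pos _).ne' hS.ne', log_exp, log_mul (by positivity) hS.ne', one_div, log_inv]
  ring

lemma klUniform_softmax :
    klUniform (softmax q l) = (∑ k, softmax q l k * q k) / l - logMeanExp q l := by
  simp only [klUniform, log_card_mul_softmax, mul_sub, sum_sub_distrib, ← sum_mul, sum_softmax,
    one_mul, sum_div, mul_div_assoc]

lemma sum_mul_sub_mul_klUniform {p : ι → ℝ} (hp : ∀ k, 0 ≤ p k) (hp1 : ∑ k, p k = 1)
    (hl : l ≠ 0) :
    ∑ k, p k * q k - l * klUniform p
      = l * logMeanExp q l - l * ∑ k, p k * log (p k / softmax q l k) := by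
  have hterm : ∀ k, p k * log (Fintype.card ι * p k)
      = p k * log (p k / softmax q l k) + p k * (q k / l - logMeanExp q l) := by
    intro k
    rcases (hp k).eq_or_lt with h | h
    · simp [← h]
    · have hK : (0 : ℝ) < Fintype.card ι := Nat.cast_pos.mpr Fintype.card_pos
      have hs := softmax_pos q l k
      rw [← log_card_mul_softmax, ← mul_add, ← log_mul (div_pos h hs).ne' (by positivity)]
      congr 2
      field_simp
  have hkl : klUniform p
      = ∑ k, p k * log (p k / softmax q l k) + (∑ k, p k * q k) / l - logMeanExp q l := by
    simp only [klUniform, hterm, mul_sub, sum_add_distrib, sum_sub_distrib, ← sum_mul, hp1,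
      one_mul, sum_div, mul_div_assoc, add_sub_assoc]
  rw [hkl]
  field_simp
  ring

lemma isGreatest_sum_mul_sub_mul_klUniform (hl : 0 < l) :
    IsGreatest {v | ∃ p : ι → ℝ, (∀ k, 0 ≤ p k) ∧ ∑ k, p k = 1 ∧
        v = ∑ k, p k * q k - l * klUniform p}
      (l * logMeanExp q l) := by
  refine ⟨⟨softmax q l, fun k => (softmax_pos q l k).le, sum_softmax q l, ?_⟩, ?_⟩
  · rw [klUniform_softmax]
    field_simp
    ring
  · rintro v ⟨p, hp, hp1, rfl⟩
    rw [sum_mul_sub_mul_klUniform q l hp hp1 hl.ne', sub_le_self_iff]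
    exact mul_nonneg hl.le
      (sum_mul_log_div_nonneg hp (softmax_pos q l) hp1 (sum_softmax q l))

lemma hasDerivAt_mul_logMeanExp (hl : l ≠ 0) :
    HasDerivAt (fun x => x * logMeanExp q x) (-klUniform (softmax q l)) l := by
  have hS := sum_exp_div_pos q l
  have hlog : HasDerivAt (logMeanExp q) (-(∑ k, softmax q l k * q k) / l ^ 2) l := by
    refine (((hasDerivAt_sum_exp_div q l hl).const_mul _).log (by positivity)).congr_deriv ?_
    simp only [softmax, div_mul_eq_mul_div, ← sum_div]
    field_simp
  refine ((hasDerivAt_id l).mul hlog).congr_deriv ?_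
  rw [klUniform_softmax, id_eq]
  field_simp
  ring

end

theorem aldr_kl_inner_and_stationarity_general (K : ℕ) (hK : 0 < K)
    (α lam0 : ℝ)
    (q : Fin K → ℝ) :
    (∀ lam : ℝ, 0 < lam →
      IsGreatest
        {v : ℝ | ∃ p : Fin K → ℝ, (∀ k, 0 ≤ p k) ∧ (∑ k : Fin K, p k = 1) ∧
          v = (∑ k : Fin K, p k * q k) - lam * ∑ k : Fin K, p k * Real.log ((K : ℝ) * p k)}
        (lam * Real.log ((1 / (K : ℝ)) * ∑ k : Fin K, Real.exp (q k / lam)))) ∧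
    (∀ lamstar : ℝ, 0 < lamstar →
      HasDerivAt
        (fun l : ℝ => l * Real.log ((1 / (K : ℝ)) * ∑ k : Fin K, Real.exp (q k / l))
          - α / 2 * (l - lam0) ^ 2) 0 lamstar →
      ∀ pstar : Fin K → ℝ,
        (pstar = fun k => Real.exp (q k / lamstar) / ∑ j : Fin K, Real.exp (q j / lamstar)) →
        (∑ k : Fin K, pstar k * Real.log ((K : ℝ) * pstar k)) + α * (lamstar - lam0) = 0) := by
  have : Nonempty (Fin K) := ⟨⟨0, hK⟩⟩
  refine ⟨fun lam hlam => ?_, fun lamstar hlamstar hstat pstar hpstar => ?_⟩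
  · simpa only [klUniform, logMeanExp, Fintype.card_fin] using
      isGreatest_sum_mul_sub_mul_klUniform q lam hlam
  · have hquad : HasDerivAt (fun l => α / 2 * (l - lam0) ^ 2) (α * (lamstar - lam0)) lamstar := by
      refine ((((hasDerivAt_id lamstar).sub_const lam0).fun_pow 2).const_mul (α / 2)).congr_deriv
        ?_
      simp only [id_eq]
      ring
    have hobj := (hasDerivAt_mul_logMeanExp q lamstar hlamstar.ne').sub hquad
    simp only [logMeanExp, Fintype.card_fin] at hobj
    have hzero := hobj.unique hstat
    subst hpstar
    simp only [klUniform, softmax, Fintype.card_fin] at hzero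
    linarith

/-- Adaptive LDR-KL: the inner maximization over the simplex gives the closed form
`g(λ) = λ log((1/K) ∑ exp(q_k/λ))` (so ψ = max over λ ≥ 0 of `g(λ) − (α/2)(λ−λ₀)²`), and at
any stationary point λ* > 0 of the outer objective one has
`KL(p*, 1/K) + α(λ* − λ₀) = 0` with `p*_k ∝ exp(q_k/λ*)`. -/
theorem aldr_kl_inner_and_stationarity (K : ℕ) (hK : 0 < K)
    (f : Fin K → ℝ) (y : Fin K) (c : Fin K → ℝ) (hc : ∀ k, 0 ≤ c k) (hcy : c y = 0)
    (α lam0 : ℝ) (hα : 0 < α) (hlam0 : 0 < lam0)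
    (q : Fin K → ℝ) (hq : q = fun k => f k + c k - f y) :
    (∀ lam : ℝ, 0 < lam →
      IsGreatest
        {v : ℝ | ∃ p : Fin K → ℝ, (∀ k, 0 ≤ p k) ∧ (∑ k : Fin K, p k = 1) ∧
          v = (∑ k : Fin K, p k * q k) - lam * ∑ k : Fin K, p k * Real.log ((K : ℝ) * p k)}
        (lam * Real.log ((1 / (K : ℝ)) * ∑ k : Fin K, Real.exp (q k / lam)))) ∧
    (∀ lamstar : ℝ, 0 < lamstar →
      HasDerivAt
        (fun l : ℝ => l * Real.log ((1 / (K : ℝ)) * ∑ k : Fin K, Real.exp (q k / l))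
          - α / 2 * (l - lam0) ^ 2) 0 lamstar →
      ∀ pstar : Fin K → ℝ,
        (pstar = fun k => Real.exp (q k / lamstar) / ∑ j : Fin K, Real.exp (q j / lamstar)) →
        (∑ k : Fin K, pstar k * Real.log ((K : ℝ) * pstar k)) + α * (lamstar - lam0) = 0) :=
  aldr_kl_inner_and_stationarity_general K hK α lam0 q
end
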